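/- Fix an integer K ≥ 1, vectors φ_1, …, φ_L ∈ ℝ^K spanning ℝ^K, and strictly positive reals I_1, …, I_L. Then the negative log-Whittle likelihood L(Y) = Σ_{ℓ=1}^{L} ( I_ℓ · exp(−⟨φ_ℓ, Y⟩) + ⟨φ_ℓ, Y⟩ ) is coercive (L(Y) → ∞ as ‖Y‖ → ∞) and attains its infimum at a unique point Y* ∈ ℝ^K; i.e., the Whittle likelihood estimate of the truncated cepstral coefficient vector exists and is unique. -/

import Mathlib

/-!
Each summand `t ↦ c * exp (-t) + t` (with `c > 0`) is strictly convex and grows at least like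
`|t| - 2 / c`. Since the `φ ℓ` span, `Y ↦ (⟪φ ℓ, Y⟫)_ℓ` is injective, hence antilipschitz in
finite dimension, so the likelihood is strictly convex and bounded below by a positive multiple
of `‖Y‖` minus a constant. A continuous coercive function on a proper space attains its minimum,
and strict convexity makes the minimizer unique.
-/

open Real Filter Set Bornology Metric
open scoped RealInnerProductSpace

theorem strictConvexOn_mul_exp_neg_add {c : ℝ} (hc : 0 < c) :
    StrictConvexOn ℝ univ fun t => c * exp (-t) + t := by
  refine ⟨convex_univ, fun x _ y _ hxy a b ha hb hab => ?_⟩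
  have hexp := strictConvexOn_exp.2 trivial trivial (neg_injective.ne hxy) ha hb hab
  simp only [smul_eq_mul] at hexp ⊢
  rw [show -(a * x + b * y) = a * -x + b * -y by ring]
  nlinarith [mul_lt_mul_of_pos_left hexp hc]

theorem abs_sub_le_mul_exp_neg_add {c : ℝ} (hc : 0 < c) (t : ℝ) :
    |t| - 2 / c ≤ c * exp (-t) + t := by
  rcases le_or_gt 0 t with ht | ht
  · rw [abs_of_nonneg ht]
    have h2c : 0 < 2 / c := by positivity
    nlinarith [mul_pos hc (exp_pos (-t))]
  · rw [abs_of_neg ht]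
    have hexp := mul_le_mul_of_nonneg_left (quadratic_le_exp_of_nonneg (neg_nonneg.2 ht.le)) hc.le
    have hsq : c * t ^ 2 / 2 + 2 * t + 2 / c = (c * t + 2) ^ 2 / (2 * c) := by
      field_simp
      ring
    have : 0 ≤ (c * t + 2) ^ 2 / (2 * c) := by positivity
    nlinarith [mul_pos hc (neg_pos.2 ht)]

section
variable {ι E : Type*} [NormedAddCommGroup E] [InnerProductSpace ℝ E] {φ : ι → E}

theorem ext_inner_left_of_span_eq_top (hspan : Submodule.span ℝ (range φ) = ⊤) {X Y : E}
    (h : ∀ i, ⟪φ i, X⟫ = ⟪φ i, Y⟫) : X = Y := by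
  have : (innerₛₗ ℝ).flip X = (innerₛₗ ℝ).flip Y := LinearMap.ext_on_range hspan h
  exact ext_inner_left ℝ (LinearMap.congr_fun this)

theorem tendsto_sum_abs_inner_cobounded [Fintype ι] [FiniteDimensional ℝ E]
    (hspan : Submodule.span ℝ (range φ) = ⊤) :
    Tendsto (fun Y => ∑ i, |⟪φ i, Y⟫|) (cobounded E) atTop := by
  let T : E →ₗ[ℝ] ι → ℝ := LinearMap.pi fun i => innerₛₗ ℝ (φ i)
  have hker : LinearMap.ker T = ⊥ :=
    LinearMap.ker_eq_bot.2 fun X Y h => ext_inner_left_of_span_eq_top hspan (congrFun h)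
  obtain ⟨C, -, hC⟩ := T.exists_antilipschitzWith hker
  refine tendsto_atTop_mono (fun Y => ?_) (tendsto_norm_cobounded_atTop.comp hC.tendsto_cobounded)
  refine (pi_norm_le_iff_of_nonneg (by positivity)).2 fun i => ?_
  exact Finset.single_le_sum (f := fun i => |⟪φ i, Y⟫|) (fun _ _ => abs_nonneg _)
    (Finset.mem_univ i)

theorem tendsto_sum_comp_inner_cobounded [Fintype ι] [FiniteDimensional ℝ E]
    (hspan : Submodule.span ℝ (range φ) = ⊤) {g : ι → ℝ → ℝ} {b : ι → ℝ}
    (hg : ∀ i t, |t| - b i ≤ g i t) :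
    Tendsto (fun Y => ∑ i, g i ⟪φ i, Y⟫) (cobounded E) atTop := by
  refine tendsto_atTop_mono (fun Y => ?_)
    (tendsto_atTop_add_const_right _ (-∑ i, b i) (tendsto_sum_abs_inner_cobounded hspan))
  rw [← sub_eq_add_neg, ← Finset.sum_sub_distrib]
  exact Finset.sum_le_sum fun i _ => hg i _

theorem strictConvexOn_sum_comp_inner [Fintype ι] (hspan : Submodule.span ℝ (range φ) = ⊤)
    {g : ι → ℝ → ℝ} (hg : ∀ i, StrictConvexOn ℝ univ (g i)) :
    StrictConvexOn ℝ univ fun Y => ∑ i, g i ⟪φ i, Y⟫ := by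
  refine ⟨convex_univ, fun X _ Y _ hXY a b ha hb hab => ?_⟩
  obtain ⟨i₀, hi₀⟩ : ∃ i, ⟪φ i, X⟫ ≠ ⟪φ i, Y⟫ := by
    by_contra! h
    exact hXY (ext_inner_left_of_span_eq_top hspan h)
  simp only [inner_add_right, inner_smul_right, smul_eq_mul, Finset.mul_sum,
    ← Finset.sum_add_distrib]
  refine Finset.sum_lt_sum (fun i _ => ?_) ⟨i₀, Finset.mem_univ _, ?_⟩
  · simpa only [smul_eq_mul] using (hg i).convexOn.2 trivial trivial ha.le hb.le hab
  · simpa only [smul_eq_mul] using (hg i₀).2 trivial trivial hi₀ ha hb hab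

end

theorem StrictConvexOn.existsUnique_forall_le {E : Type*} [AddCommMonoid E] [Module ℝ E]
    [PseudoMetricSpace E] [ProperSpace E] {f : E → ℝ} (hf : StrictConvexOn ℝ univ f)
    (hcont : Continuous f) (hcoer : Tendsto f (cobounded E) atTop) : ∃! x, ∀ y, f x ≤ f y := by
  obtain ⟨x, hx⟩ := hcont.exists_forall_le (cobounded_eq_cocompact (α := E) ▸ hcoer)
  exact ⟨x, hx, fun y hy => hf.eq_of_isMinOn (fun z _ => hy z) (fun z _ => hx z) trivial trivial⟩

theorem whittle_likelihood_unique_minimizer_general (K L : ℕ)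
    (φ : Fin L → EuclideanSpace ℝ (Fin K))
    (hspan : Submodule.span ℝ (Set.range φ) = ⊤)
    (I : Fin L → ℝ) (hI : ∀ ℓ, 0 < I ℓ)
    (F : EuclideanSpace ℝ (Fin K) → ℝ)
    (hF : ∀ Y : EuclideanSpace ℝ (Fin K),
      F Y = ∑ ℓ : Fin L, (I ℓ * Real.exp (-(inner ℝ (φ ℓ) Y : ℝ)) + (inner ℝ (φ ℓ) Y : ℝ))) :
    Filter.Tendsto F (Filter.comap (fun Y : EuclideanSpace ℝ (Fin K) => ‖Y‖) Filter.atTop)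
      Filter.atTop ∧
    ∃! Ystar : EuclideanSpace ℝ (Fin K), ∀ Y : EuclideanSpace ℝ (Fin K), F Ystar ≤ F Y := by
  obtain rfl : F = fun Y => ∑ ℓ, (I ℓ * exp (-⟪φ ℓ, Y⟫) + ⟪φ ℓ, Y⟫) := funext hF
  have hcoer := tendsto_sum_comp_inner_cobounded hspan fun ℓ => abs_sub_le_mul_exp_neg_add (hI ℓ)
  have hconvex :=
    strictConvexOn_sum_comp_inner hspan fun ℓ => strictConvexOn_mul_exp_neg_add (hI ℓ)
  exact ⟨comap_norm_atTop (E := EuclideanSpace ℝ (Fin K)) ▸ hcoer,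
    hconvex.existsUnique_forall_le (by fun_prop) hcoer⟩

/-- Existence and uniqueness of the Whittle likelihood estimate: if the periodogram
ordinates are strictly positive and the basis vectors span `ℝ^K`, the negative
log-Whittle likelihood is coercive (`L(Y) → ∞` as `‖Y‖ → ∞`) and attains its infimum at a
unique point. -/
theorem whittle_likelihood_unique_minimizer (K L : ℕ) (hK : 1 ≤ K)
    (φ : Fin L → EuclideanSpace ℝ (Fin K))
    (hspan : Submodule.span ℝ (Set.range φ) = ⊤)
    (I : Fin L → ℝ) (hI : ∀ ℓ, 0 < I ℓ)
    (F : EuclideanSpace ℝ (Fin K) → ℝ)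
    (hF : ∀ Y : EuclideanSpace ℝ (Fin K),
      F Y = ∑ ℓ : Fin L, (I ℓ * Real.exp (-(inner ℝ (φ ℓ) Y : ℝ)) + (inner ℝ (φ ℓ) Y : ℝ))) :
    Filter.Tendsto F (Filter.comap (fun Y : EuclideanSpace ℝ (Fin K) => ‖Y‖) Filter.atTop)
      Filter.atTop ∧
    ∃! Ystar : EuclideanSpace ℝ (Fin K), ∀ Y : EuclideanSpace ℝ (Fin K), F Ystar ≤ F Y :=
  whittle_likelihood_unique_minimizer_general K L φ hspan I hI F hF
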